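/- arXiv:0806.3809 — 2 statements merged into one kernel-verified Lean document; each statement's English description precedes it below -/
import Mathlib

section
/- Let r, b, s, m, k be positive integers with gcd(b, r) = 1, r = s·m, q = s·k, gcd(m, k) = 1, and 0 < q < r. For an integer x let x̄ denote the least nonnegative residue of x mod r. Then the sum Ξ := Σ_{l=1}^{m-1} ( -(q·l mod r)·(r²−1)/(12r) + Σ_{j=1}^{(q·l mod r)−1} (b·j mod r)·(r − (b·j mod r))/(2r) ) equals −(m²−1)·r/(24m). -/
/-!
Write `c(n) := cTerm r b n` and `w(x) := quadTerm r x = x (r - x) / (2r)`. Since `j ↦ b j mod r`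
permutes `{1, …, r-1}`, the full inner sum is `∑_{0<x<r} w(x) = (r² - 1)/12`, i.e. `c(r) = 0`.
The reflection `j ↦ r - j` preserves `w(b j mod r)`, so the inner sums of `c(n)` and `c(r - n)`
fill up all of `{1, …, r-1}` except `j = n`, giving `c(n) + c(r - n) = -w(b n mod r)`.

As `q l mod r = s (k l mod m)` and `l ↦ k l mod m` permutes `{1, …, m-1}`, the sum is
`Ξ = ∑_{0<t<m} c(s t)`. Pairing `t` with `m - t` yields
`2Ξ = -∑_{0<t<m} w(b s t mod r) = -s ∑_{0<u<m} u (m - u) / (2m) = -s (m² - 1)/12`.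
-/

open Finset

/-- Orbifold Riemann–Roch correction term `c_P(qK)` at a cyclic quotient
singularity of type `(1/r)(1,-1,b)`. -/
def cTerm (r b q : ℕ) : ℚ :=
  -(q : ℚ) * ((r : ℚ) ^ 2 - 1) / (12 * (r : ℚ)) +
    ∑ j ∈ Finset.Icc 1 (q - 1),
      ((b * j % r : ℕ) : ℚ) * ((r : ℚ) - ((b * j % r : ℕ) : ℚ)) / (2 * (r : ℚ))

def quadTerm (r x : ℕ) : ℚ := (x : ℚ) * ((r : ℚ) - (x : ℚ)) / (2 * (r : ℚ))

lemma Nat.Icc_one_sub_one_eq_Ico (n : ℕ) : Icc 1 (n - 1) = Ico 1 n := by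
  ext
  simp only [mem_Icc, mem_Ico]
  omega

lemma cTerm_eq_sum_Ico (r b n : ℕ) :
    cTerm r b n = -(n : ℚ) * ((r : ℚ) ^ 2 - 1) / (12 * (r : ℚ)) +
      ∑ j ∈ Ico 1 n, quadTerm r (b * j % r) := by
  rw [cTerm, Nat.Icc_one_sub_one_eq_Ico]
  rfl

lemma sum_Ico_mul_mod {M : Type*} [AddCommMonoid M] {a n : ℕ} (ha : a.Coprime n) (f : ℕ → M) :
    ∑ x ∈ Ico 1 n, f (a * x % n) = ∑ x ∈ Ico 1 n, f x := by
  have maps : Set.MapsTo (fun x => a * x % n) (Ico 1 n : Set ℕ) (Ico 1 n) := by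
    intro x hx
    simp only [coe_Ico, Set.mem_Ico] at hx ⊢
    have hndvd : ¬ n ∣ a * x := fun h =>
      Nat.not_dvd_of_pos_of_lt hx.1 hx.2 (ha.symm.dvd_of_dvd_mul_left h)
    exact ⟨Nat.pos_of_ne_zero (mt Nat.dvd_of_mod_eq_zero hndvd), Nat.mod_lt _ (by omega)⟩
  have inj : Set.InjOn (fun x => a * x % n) (Ico 1 n : Set ℕ) := by
    intro x hx y hy hxy
    simp only [coe_Ico, Set.mem_Ico] at hx hy
    exact (Nat.ModEq.cancel_left_of_coprime (Nat.coprime_comm.mp ha) hxy).eq_of_lt_of_lt hx.2 hy.2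
  exact sum_nbij _ maps inj (surjOn_of_injOn_of_card_le _ maps inj le_rfl) fun _ _ => rfl

lemma sum_range_mul_sub (n : ℕ) :
    ∑ x ∈ range n, (x : ℚ) * (n - x) = n * (n ^ 2 - 1) / 6 := by
  have gauss : ∀ n : ℕ, ∑ x ∈ range n, (x : ℚ) = n * (n - 1) / 2 := by
    intro n
    induction n with
    | zero => simp
    | succ n ih => rw [sum_range_succ, ih]; push_cast; ring
  induction n with
  | zero => simp
  | succ n ih =>
    have shift : ∑ x ∈ range n, (x : ℚ) * ((n + 1 : ℕ) - x) =
        ∑ x ∈ range n, (x : ℚ) * (n - x) + ∑ x ∈ range n, (x : ℚ) := by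
      rw [← sum_add_distrib]
      push_cast
      exact sum_congr rfl fun _ _ => by ring
    rw [sum_range_succ, shift, ih, gauss]
    push_cast
    ring

lemma sum_quadTerm_mul_mod {r b : ℕ} (hr : 0 < r) (hbr : b.Coprime r) :
    ∑ j ∈ Ico 1 r, quadTerm r (b * j % r) = ((r : ℚ) ^ 2 - 1) / 12 := by
  have hr0 : (r : ℚ) ≠ 0 := by positivity
  have hrange : ∑ x ∈ Ico 1 r, (x : ℚ) * (r - x) = ∑ x ∈ range r, (x : ℚ) * (r - x) := by
    rw [range_eq_Ico, sum_eq_sum_Ico_succ_bot hr]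
    simp
  rw [sum_Ico_mul_mod hbr]
  unfold quadTerm
  rw [← sum_div, hrange, sum_range_mul_sub]
  field_simp
  ring

lemma quadTerm_sub {r x : ℕ} (h : x ≤ r) : quadTerm r (r - x) = quadTerm r x := by
  unfold quadTerm
  rw [Nat.cast_sub h]
  ring

lemma quadTerm_val_neg {r : ℕ} [NeZero r] (a : ZMod r) :
    quadTerm r (-a).val = quadTerm r a.val := by
  rw [ZMod.neg_val]
  split_ifs with ha
  · rw [ha, ZMod.val_zero]
  · exact quadTerm_sub (ZMod.val_le a)

lemma quadTerm_mul_sub_mod {r b j : ℕ} (hr : 0 < r) (hj : j ≤ r) :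
    quadTerm r (b * (r - j) % r) = quadTerm r (b * j % r) := by
  have : NeZero r := NeZero.of_pos hr
  rw [← ZMod.val_natCast, ← ZMod.val_natCast r (b * j), Nat.cast_mul, Nat.cast_sub hj,
    ZMod.natCast_self, zero_sub, mul_neg, ← Nat.cast_mul, quadTerm_val_neg]

lemma cTerm_add_cTerm_sub {r b n : ℕ} (hbr : b.Coprime r) (hn : 0 < n) (hnr : n < r) :
    cTerm r b n + cTerm r b (r - n) = -quadTerm r (b * n % r) := by
  have hr : 0 < r := hn.trans hnr
  set w : ℕ → ℚ := fun j => quadTerm r (b * j % r)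
  have split : ∑ j ∈ Ico 1 r, w j = ∑ j ∈ Ico 1 n, w j + (w n + ∑ j ∈ Ico (n + 1) r, w j) := by
    rw [← sum_Ico_consecutive _ hn hnr.le, sum_eq_sum_Ico_succ_bot hnr]
  have reflect : ∑ j ∈ Ico 1 (r - n), w j = ∑ j ∈ Ico (n + 1) r, w j := by
    have := sum_Ico_reflect w (n + 1) (Nat.le_succ r)
    rw [Nat.add_sub_cancel_left, Nat.add_sub_add_right] at this
    rw [← this]
    exact sum_congr rfl fun j hj => quadTerm_mul_sub_mod (b := b) hr (mem_Ico.mp hj).2.le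
  have full := sum_quadTerm_mul_mod hr hbr
  rw [cTerm_eq_sum_Ico, cTerm_eq_sum_Ico, Nat.cast_sub hnr.le]
  change _ + ∑ j ∈ Ico 1 n, w j + (_ + ∑ j ∈ Ico 1 (r - n), w j) = -w n
  have linear : -(n : ℚ) * ((r : ℚ) ^ 2 - 1) / (12 * r) - (r - n) * ((r : ℚ) ^ 2 - 1) / (12 * r) =
      -((r : ℚ) ^ 2 - 1) / 12 := by
    field_simp
    ring
  rw [reflect]
  rw [split] at full
  linear_combination linear + full

lemma quadTerm_mul_mul (s m u : ℕ) (hs : 0 < s) :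
    quadTerm (s * m) (s * u) = s * quadTerm m u := by
  unfold quadTerm
  push_cast
  have hs0 : (s : ℚ) ≠ 0 := by positivity
  field_simp

lemma sum_quadTerm_mul_mul_mod {s m b : ℕ} (hsm : 0 < s * m) (hb : b.Coprime (s * m)) :
    ∑ t ∈ Ico 1 m, quadTerm (s * m) (b * (s * t) % (s * m)) = s * ((m : ℚ) ^ 2 - 1) / 12 := by
  have hmod : ∀ t, b * (s * t) % (s * m) = s * (b * t % m) := fun t => by
    rw [mul_left_comm, Nat.mul_mod_mul_left]
  simp_rw [hmod, quadTerm_mul_mul _ _ _ (Nat.pos_of_mul_pos_right hsm), ← mul_sum]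
  rw [sum_quadTerm_mul_mod (Nat.pos_of_mul_pos_left hsm) (Nat.Coprime.coprime_mul_left_right hb)]
  ring

theorem stmt0_general (r b s m k q : ℕ) (hr : 0 < r)
    (hbr : Nat.gcd b r = 1) (hrm : r = s * m)
    (hq : q = s * k) (hmk : Nat.gcd m k = 1) :
    ∑ l ∈ Finset.Icc 1 (m - 1), cTerm r b (q * l % r) =
      -(((m : ℚ) ^ 2 - 1) * (r : ℚ)) / (24 * (m : ℚ)) := by
  subst hrm hq
  have hs : 0 < s := Nat.pos_of_mul_pos_right hr
  have hm : 0 < m := Nat.pos_of_mul_pos_left hr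
  have reindex : ∑ l ∈ Icc 1 (m - 1), cTerm (s * m) b (s * k * l % (s * m)) =
      ∑ t ∈ Ico 1 m, cTerm (s * m) b (s * t) := by
    simp_rw [Nat.Icc_one_sub_one_eq_Ico, mul_assoc, Nat.mul_mod_mul_left]
    exact sum_Ico_mul_mod (Nat.coprime_comm.mp hmk) fun t => cTerm (s * m) b (s * t)
  have reflect : ∑ t ∈ Ico 1 m, cTerm (s * m) b (s * (m - t)) =
      ∑ t ∈ Ico 1 m, cTerm (s * m) b (s * t) := by
    simpa using sum_Ico_reflect (fun t => cTerm (s * m) b (s * t)) 1 (Nat.le_succ m)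
  have pair : ∀ t ∈ Ico 1 m, cTerm (s * m) b (s * t) + cTerm (s * m) b (s * (m - t)) =
      -quadTerm (s * m) (b * (s * t) % (s * m)) := fun t ht => by
    rw [Nat.mul_sub]
    exact cTerm_add_cTerm_sub hbr (Nat.mul_pos hs (mem_Ico.mp ht).1)
      (Nat.mul_lt_mul_left hs |>.mpr (mem_Ico.mp ht).2)
  have twice := sum_congr rfl pair
  rw [sum_add_distrib, reflect, sum_neg_distrib, sum_quadTerm_mul_mul_mod hr hbr] at twice
  have half : ∑ t ∈ Ico 1 m, cTerm (s * m) b (s * t) = -(s * ((m : ℚ) ^ 2 - 1)) / 24 := by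
    linarith
  have hm0 : (m : ℚ) ≠ 0 := by positivity
  rw [reindex, half]
  push_cast
  field_simp

theorem stmt0 (r b s m k q : ℕ) (hr : 0 < r) (hb : 0 < b) (hs : 0 < s)
    (hm : 0 < m) (hk : 0 < k) (hbr : Nat.gcd b r = 1) (hrm : r = s * m)
    (hq : q = s * k) (hmk : Nat.gcd m k = 1) (hq0 : 0 < q) (hqr : q < r) :
    ∑ l ∈ Finset.Icc 1 (m - 1), cTerm r b (q * l % r) =
      -(((m : ℚ) ^ 2 - 1) * (r : ℚ)) / (24 * (m : ℚ)) :=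
  stmt0_general r b s m k q hr hbr hrm hq hmk
end

section
/- Suppose m is a prime, r₁,…,r_n are positive integers each divisible by m, and (m+1)·(r₁+⋯+r_n) = 12m. Then m ∈ {2, 3, 5, 11}, and moreover the multiset {r₁,…,r_n} is one of: for m=2: {8}, {2,6}, {4,4}, {2,2,4}, {2,2,2,2}; for m=3: {9}, {3,3,3}, {3,6}; for m=5: {5,5}, {10}; for m=11: {11}. -/
/-!
Since `m` and `m + 1` are coprime, `(m + 1) * Σ rᵢ = 12 m` forces `m + 1 ∣ 12`, which leaves the
primes `2, 3, 5, 11`. Writing `rᵢ = m qᵢ`, the `qᵢ` form a partition of `12 / (m + 1) ≤ 4`.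
A multiset of positive integers with sum `n` contains each `a` at most `n / a` times, so it is a
sub-multiset of `∑ a ∈ [1, n], (n / a) • {a}`; the partitions of `4, 3, 2, 1` are therefore found
by a finite check.
-/

namespace Multiset

def partsBound (n : ℕ) : Multiset ℕ := ∑ i ∈ Finset.Icc 1 n, replicate (n / i) i

lemma count_partsBound {a : ℕ} (ha : 0 < a) (n : ℕ) : count a (partsBound n) = n / a := by
  rw [partsBound, count_sum', Finset.sum_eq_single a]
  · exact count_replicate_self _ _
  · intro i _ hia
    exact count_eq_zero.2 fun h => hia (eq_of_mem_replicate h).symm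
  · intro ha'
    rw [count_replicate_self, Nat.div_eq_of_lt]
    simp only [Finset.mem_Icc, not_and_or, not_le] at ha'
    omega

lemma count_mul_le_sum (s : Multiset ℕ) (a : ℕ) : count a s * a ≤ s.sum := by
  obtain ⟨u, hu⟩ := le_iff_exists_add.1 (le_count_iff_replicate_le.1 (le_refl (count a s)))
  calc count a s * a = (replicate (count a s) a).sum := by rw [sum_replicate, smul_eq_mul]
    _ ≤ (replicate (count a s) a + u).sum := by rw [sum_add]; exact Nat.le_add_right _ _
    _ = s.sum := by rw [← hu]

lemma le_partsBound_sum {s : Multiset ℕ} (hpos : ∀ r ∈ s, 0 < r) : s ≤ partsBound s.sum := by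
  refine le_iff_count.2 fun a => ?_
  rcases Nat.eq_zero_or_pos a with rfl | ha
  · simp [count_eq_zero.2 fun h => (hpos 0 h).false]
  · rw [count_partsBound ha, Nat.le_div_iff_mul_le ha]
    exact count_mul_le_sum s a

theorem forall_of_forall_mem_powerset_partsBound {n : ℕ} {P : Multiset ℕ → Prop}
    (h : ∀ t ∈ (partsBound n).powerset, t.sum = n → P t)
    (s : Multiset ℕ) (hpos : ∀ r ∈ s, 0 < r) (hs : s.sum = n) : P s :=
  h s (mem_powerset.2 (hs ▸ le_partsBound_sum hpos)) hs

lemma exists_eq_map_mul_of_forall_dvd {m : ℕ} {s : Multiset ℕ} (hdvd : ∀ r ∈ s, m ∣ r) :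
    ∃ t : Multiset ℕ, s = t.map (m * ·) :=
  ⟨s.map (· / m), by
    rw [map_map]
    exact ((map_congr rfl fun r hr => Nat.mul_div_cancel' (hdvd r hr)).trans (map_id s)).symm⟩

end Multiset

lemma Nat.succ_dvd_of_succ_mul_eq_mul {m a c : ℕ} (h : (m + 1) * a = c * m) : m + 1 ∣ c :=
  (Nat.coprime_self_add_left.2 (Nat.coprime_one_left m)).dvd_of_dvd_mul_right ⟨a, h.symm⟩

lemma Nat.Prime.eq_of_succ_dvd_twelve {m : ℕ} (hm : m.Prime) (h : m + 1 ∣ 12) :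
    m = 2 ∨ m = 3 ∨ m = 5 ∨ m = 11 := by
  have : m ≤ 11 := by have := Nat.le_of_dvd (by norm_num) h; omega
  interval_cases m <;> simp_all +decide

theorem stmt4 (m : ℕ) (hm : m.Prime) (s : Multiset ℕ)
    (hpos : ∀ r ∈ s, 0 < r) (hdvd : ∀ r ∈ s, m ∣ r)
    (hsum : (m + 1) * s.sum = 12 * m) :
    m ∈ ({2, 3, 5, 11} : Set ℕ) ∧
    (m = 2 → s = {8} ∨ s = {2, 6} ∨ s = {4, 4} ∨ s = {2, 2, 4} ∨ s = {2, 2, 2, 2}) ∧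
    (m = 3 → s = {9} ∨ s = {3, 3, 3} ∨ s = {3, 6}) ∧
    (m = 5 → s = {5, 5} ∨ s = {10}) ∧
    (m = 11 → s = {11}) := by
  have hm_cases := hm.eq_of_succ_dvd_twelve (Nat.succ_dvd_of_succ_mul_eq_mul hsum)
  obtain ⟨t, rfl⟩ := Multiset.exists_eq_map_mul_of_forall_dvd hdvd
  have htpos : ∀ q ∈ t, 0 < q := fun q hq =>
    Nat.pos_of_mul_pos_left (hpos _ (Multiset.mem_map_of_mem _ hq))
  have ht : t.sum = 12 / (m + 1) := by
    rw [Multiset.sum_map_mul_left, Multiset.map_id', mul_left_comm, mul_comm 12] at hsum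
    exact Nat.eq_div_of_mul_eq_right m.succ_ne_zero (Nat.eq_of_mul_eq_mul_left hm.pos hsum)
  clear hpos hdvd hsum
  revert t
  rcases hm_cases with rfl | rfl | rfl | rfl
  all_goals
    apply Multiset.forall_of_forall_mem_powerset_partsBound
    set_option maxRecDepth 4000 in decide
end
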